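/- arXiv:1802.00195 — 8 statements merged into one kernel-verified Lean document; each statement's English description precedes it below -/
import Mathlib

section
/- Define the test formula |U| ≥ n as ⊤ −⊛ (|h| ≥ n), where φ₁ −⊛ φ₂ (septraction) holds in (U,s,h) iff there exists a heap h' disjoint from h such that (U,s,h') ⊨ φ₁ and (U,s,h⊎h') ⊨ φ₂. Then for every SL-structure (U, s, h) and every n ∈ ℕ, (U, s, h) ⊨ |U| ≥ n if and only if |U| ≥ n (the cardinality of the universe U is at least n). -/
/-- Domain of a heap: locations where the heap is defined. -/
def hdom {U : Type*} {k : ℕ} (h : U → Option (Fin k → U)) : Set U := {u | (h u).isSome}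

/-- Two heaps are disjoint iff their domains are disjoint. -/
def hdisj {U : Type*} {k : ℕ} (h₁ h₂ : U → Option (Fin k → U)) : Prop :=
  ∀ u, h₁ u = none ∨ h₂ u = none

/-- Union of (disjoint) heaps. -/
def hunion {U : Type*} {k : ℕ} (h₁ h₂ : U → Option (Fin k → U)) :
    U → Option (Fin k → U) :=
  fun u => (h₁ u).elim (h₂ u) some

/-! The domain of `h ⊎ h'` is a finite subset of `U`, so its size is at most `|U|`. Conversely,
given `n` locations `t ⊆ U`, allocate exactly the cells of `t` outside `dom h`: this heap is
disjoint from `h`, and the union covers `t`. -/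

section Heap

variable {U : Type*} {k : ℕ}

lemma hdom_hunion (h₁ h₂ : U → Option (Fin k → U)) :
    hdom (hunion h₁ h₂) = hdom h₁ ∪ hdom h₂ := by
  ext u
  simp only [hdom, hunion, Set.mem_ofPred_eq, Set.mem_union]
  cases h₁ u <;> simp

lemma hdisj_of_disjoint_hdom {h₁ h₂ : U → Option (Fin k → U)}
    (hd : Disjoint (hdom h₁) (hdom h₂)) : hdisj h₁ h₂ := fun u => by
  by_contra! hu
  exact Set.disjoint_left.1 hd (Option.isSome_iff_ne_none.2 hu.1) (Option.isSome_iff_ne_none.2 hu.2)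

/-- Only the domain matters; each cell of `S` is filled with pointers to itself. -/
noncomputable def heapOn (S : Set U) : U → Option (Fin k → U) :=
  open Classical in fun u => if u ∈ S then some (fun _ => u) else none

lemma hdom_heapOn (S : Set U) : hdom (heapOn (k := k) S) = S := by
  ext u
  by_cases hu : u ∈ S <;> simp [hdom, heapOn, hu]

end Heap

lemma Cardinal.exists_finset_card_eq_of_natCast_le_mk {α : Type*} {n : ℕ}
    (hn : (n : Cardinal) ≤ Cardinal.mk α) : ∃ t : Finset α, t.card = n := by
  obtain ⟨S, hS⟩ := Cardinal.le_mk_iff_exists_set.1 hn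
  obtain ⟨t, -, ht⟩ := Cardinal.mk_set_eq_nat_iff_finset.1 hS
  exact ⟨t, ht⟩

theorem stmt3_general {U : Type*} {k : ℕ}
    (h : U → Option (Fin k → U)) (hfin : (hdom h).Finite) (n : ℕ) :
    (∃ h' : U → Option (Fin k → U),
        (hdom h').Finite ∧ hdisj h h' ∧ n ≤ (hdom (hunion h h')).ncard)
    ↔ (n : Cardinal) ≤ Cardinal.mk U := by
  constructor
  · rintro ⟨h', hfin', -, hn⟩
    rw [hdom_hunion] at hn
    calc (n : Cardinal) ≤ (hdom h ∪ hdom h').ncard := by exact_mod_cast hn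
      _ = Cardinal.mk ↥(hdom h ∪ hdom h') := Set.cast_ncard (hfin.union hfin')
      _ ≤ Cardinal.mk U := Cardinal.mk_set_le _
  · intro hn
    obtain ⟨t, rfl⟩ := Cardinal.exists_finset_card_eq_of_natCast_le_mk hn
    have hdom' : hdom (heapOn (k := k) (↑t \ hdom h)) = ↑t \ hdom h := hdom_heapOn _
    refine ⟨heapOn (↑t \ hdom h), by rw [hdom']; exact t.finite_toSet.sdiff, ?_, ?_⟩
    · exact hdisj_of_disjoint_hdom (by rw [hdom']; exact Set.disjoint_sdiff_right)
    · rw [hdom_hunion, hdom', Set.union_sdiff_self, ← Set.ncard_coe_finset]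
      exact Set.ncard_le_ncard Set.subset_union_right (hfin.union t.finite_toSet)

/-- `|U| ≥ n ≝ ⊤ −⊛ (|h| ≥ n)` holds in `(U,s,h)` iff the
cardinality of the universe `U` is at least `n`.  The septraction
`⊤ −⊛ (|h| ≥ n)` holds iff there is a heap `h'` disjoint from `h` (satisfying
`⊤`) such that `h ⊎ h'` satisfies `|h| ≥ n`, i.e. `|dom(h ⊎ h')| ≥ n`. -/
theorem stmt3 {U : Type*} [Nonempty U] {k : ℕ} (hk : 1 ≤ k)
    (h : U → Option (Fin k → U)) (hfin : (hdom h).Finite) (n : ℕ) :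
    (∃ h' : U → Option (Fin k → U),
        (hdom h').Finite ∧ hdisj h h' ∧ n ≤ (hdom (hunion h h')).ncard)
    ↔ (n : Cardinal) ≤ Cardinal.mk U :=
  stmt3_general h hfin n
end

section
/- Define the test formula |h| ≥ |U| − n as (|h| ≥ n+1) −∗ ⊥. Then for every SL-structure (U, s, h) with U finite or infinite, and every n ∈ ℕ, (U, s, h) ⊨ |h| ≥ |U| − n if and only if |dom(h)| ≥ |U| − n (as cardinals, where for infinite U the condition |dom(h)| ≥ |U| − n is interpreted as: there do not exist n+1 or more locations outside dom(h); equivalently |U ∖ dom(h)| ≤ n). -/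
/-!
The wand `(|h| ≥ n+1) −∗ ⊥` holds exactly when no finite set of more than `n` locations is
disjoint from `dom(h)`: every heap disjoint from `h` has its domain in the complement of
`dom(h)`, and conversely every finite subset `S` of that complement is the domain of a heap
disjoint from `h` (map each `u ∈ S` to the constant tuple at `u`). A set has at most `n`
elements iff each of its finite subsets does.
-/

open Cardinal

theorem Cardinal.mk_le_natCast_iff_forall_ncard_le {α : Type*} {s : Set α} {n : ℕ} :
    #s ≤ n ↔ ∀ t ⊆ s, t.Finite → t.ncard ≤ n := by
  constructor
  · intro hs t hts ht
    exact_mod_cast (Set.cast_ncard ht).trans_le ((mk_le_mk_of_subset hts).trans hs)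
  · intro H
    by_contra! hlt
    obtain ⟨t, hts, ht⟩ := le_mk_iff_exists_subset.mp (add_one_le_of_lt hlt)
    rw [← Nat.cast_succ] at ht
    have ht_finite : t.Finite := by
      rw [← lt_aleph0_iff_set_finite, ht]
      exact natCast_lt_aleph0
    have ht_ncard : t.ncard = n + 1 := by
      rw [← Nat.card_coe_set_eq, Nat.card, ht, toNat_natCast]
    exact absurd (H t hts ht_finite) (by omega)

section Heaps

variable {U : Type*} {k : ℕ}

theorem hdom_subset_compl_of_hdisj {h h' : U → Option (Fin k → U)} (hd : hdisj h h') :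
    hdom h' ⊆ (hdom h)ᶜ := by
  intro u hu hu'
  rcases hd u with hnone | hnone <;> simp [hdom, hnone] at hu hu'

open Classical in
noncomputable def loopHeap (S : Set U) : U → Option (Fin k → U) :=
  fun u => if u ∈ S then some (fun _ => u) else none

theorem hdom_loopHeap (S : Set U) : hdom (loopHeap (k := k) S) = S := by
  ext u
  simp [hdom, loopHeap]

theorem hdisj_loopHeap {h : U → Option (Fin k → U)} {S : Set U} (hS : S ⊆ (hdom h)ᶜ) :
    hdisj h (loopHeap S) := by
  intro u
  by_cases hu : u ∈ S
  · left
    simpa [hdom] using hS hu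
  · right
    simp [loopHeap, hu]

theorem forall_hdisj_ncard_le_iff (h : U → Option (Fin k → U)) (n : ℕ) :
    (∀ h' : U → Option (Fin k → U), (hdom h').Finite → hdisj h h' → (hdom h').ncard ≤ n) ↔
      ∀ S ⊆ (hdom h)ᶜ, S.Finite → S.ncard ≤ n := by
  constructor
  · intro H S hS hSfin
    have := H (loopHeap S) ((hdom_loopHeap S).symm ▸ hSfin) (hdisj_loopHeap hS)
    rwa [hdom_loopHeap] at this
  · intro H h' hfin' hd
    exact H _ (hdom_subset_compl_of_hdisj hd) hfin'

end Heaps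

theorem stmt4_general {U : Type*} {k : ℕ}
    (h : U → Option (Fin k → U)) (n : ℕ) :
    (∀ h' : U → Option (Fin k → U),
        (hdom h').Finite → hdisj h h' → ¬ (n + 1 ≤ (hdom h').ncard))
    ↔ Cardinal.mk ↥((hdom h)ᶜ) ≤ (n : Cardinal) := by
  simp only [not_le, Nat.lt_succ_iff]
  rw [forall_hdisj_ncard_le_iff, mk_le_natCast_iff_forall_ncard_le]

/-- `|h| ≥ |U| − n ≝ (|h| ≥ n+1) −∗ ⊥` holds in `(U,s,h)` iff
there do not exist `n+1` or more locations outside `dom(h)`, i.e.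
`|U ∖ dom(h)| ≤ n`.  The magic wand with consequent `⊥` says no heap `h'`
disjoint from `h` satisfies `|h| ≥ n+1`. -/
theorem stmt4 {U : Type*} [Nonempty U] [Countable U] {k : ℕ} (hk : 1 ≤ k)
    (h : U → Option (Fin k → U)) (hfin : (hdom h).Finite) (n : ℕ) :
    (∀ h' : U → Option (Fin k → U),
        (hdom h').Finite → hdisj h h' → ¬ (n + 1 ≤ (hdom h').ncard))
    ↔ Cardinal.mk ↥((hdom h)ᶜ) ≤ (n : Cardinal) :=
  stmt4_general h n
end

section
/- Let α, β ∈ ℤ with α > 1 and β ≤ 0, and let (U,s,h) be an SL-structure with U finite. Then |dom(h)| ≥ α·|U| + β holds if and only if: |U| < ⌈(1−β)/(α−1)⌉ and, for every n with 1 ≤ n ≤ ⌊−β/(α−1)⌋, if |U| = n then |dom(h)| ≥ α·n + β. -/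
/-- for integers `α > 1`, `β ≤ 0` and finite `U`,
`|dom(h)| ≥ α·|U| + β` iff `|U| < ⌈(1−β)/(α−1)⌉` and for every `n` with
`1 ≤ n ≤ ⌊−β/(α−1)⌋`, if `|U| = n` then `|dom(h)| ≥ α·n + β`. -/
theorem stmt7 {U : Type*} [Fintype U] [Nonempty U] {k : ℕ} (hk : 1 ≤ k)
    (h : U → Option (Fin k → U))
    (α β : ℤ) (hα : 1 < α) (hβ : β ≤ 0) :
    (α * (Fintype.card U : ℤ) + β ≤ ((hdom h).ncard : ℤ)) ↔
      ((Fintype.card U : ℤ) < ⌈(1 - (β : ℚ)) / ((α : ℚ) - 1)⌉ ∧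
        ∀ n : ℤ, 1 ≤ n → n ≤ ⌊(-(β : ℚ)) / ((α : ℚ) - 1)⌋ →
          (Fintype.card U : ℤ) = n → α * n + β ≤ ((hdom h).ncard : ℤ)) := by
  set c : ℤ := (Fintype.card U : ℤ) with hc
  set d : ℤ := ((hdom h).ncard : ℤ) with hd
  have hdc : d ≤ c := by
    have : (hdom h).ncard ≤ Fintype.card U := by
      simpa [Set.ncard_univ] using
        Set.ncard_le_ncard (Set.subset_univ (hdom h)) Set.finite_univ
    rw [hd, hc]; exact_mod_cast this
  have hA : (0 : ℚ) < (α : ℚ) - 1 := by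
    have : (1 : ℚ) < (α : ℚ) := by exact_mod_cast hα
    linarith
  have key : c ≤ ⌊(-(β : ℚ)) / ((α : ℚ) - 1)⌋ ↔ c * (α - 1) ≤ -β := by
    rw [Int.le_floor, le_div_iff₀ hA]
    constructor <;> intro h' <;> exact_mod_cast h'
  have key2 : c < ⌈(1 - (β : ℚ)) / ((α : ℚ) - 1)⌉ ↔ c * (α - 1) ≤ -β := by
    rw [Int.lt_ceil, lt_div_iff₀ hA]
    have : ((c * (α - 1) : ℤ) : ℚ) = (c : ℚ) * ((α : ℚ) - 1) := by push_cast; ring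
    rw [← this]
    constructor
    · intro h'
      have h'' : (c * (α - 1) : ℤ) < 1 - β := by exact_mod_cast h'
      omega
    · intro h'
      have h'' : (c * (α - 1) : ℤ) < 1 - β := by omega
      exact_mod_cast h''
  constructor
  · intro H
    have hkey : c * (α - 1) ≤ -β := by nlinarith
    refine ⟨key2.mpr hkey, fun n _ _ hn => ?_⟩
    rw [← hn]; exact H
  · rintro ⟨h1, h2⟩
    have hc1 : 1 ≤ c := by
      rw [hc]; exact_mod_cast Fintype.card_pos
    exact h2 c hc1 (key.mpr (key2.mp h1)) rfl
end

section
/- Let φ be a first-order formula with a subformula occurrence ∃y.ψ at positive polarity, and consider ∀x. φ[∃y.ψ]. If x does not occur free in ψ and y does not occur free in φ (outside ψ), then ∀x. φ[∃y.ψ] is logically equivalent to ∃y ∀x. φ[ψ], where φ[ψ] denotes the result of replacing the occurrence ∃y.ψ by ψ. -/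
/-- if `∃y.ψ` occurs at positive polarity in `φ` (modelled by
monotonicity of `φ` in the hole), `x` is not free in `ψ` and `y` is not free
in `φ` outside the hole, then `∀x. φ[∃y.ψ] ≡ ∃y ∀x. φ[ψ]`, over a nonempty
universe. -/
theorem stmt10 {U : Type*} [Nonempty U]
    (φ : U → Prop → Prop) (ψ : U → Prop)
    (hmono : ∀ (x : U) (p q : Prop), (p → q) → φ x p → φ x q) :
    (∀ x : U, φ x (∃ y : U, ψ y)) ↔ (∃ y : U, ∀ x : U, φ x (ψ y)) := by
  constructor
  · intro h
    by_cases he : ∃ y : U, ψ y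
    · obtain ⟨y, hy⟩ := he
      exact ⟨y, fun x => hmono x _ _ (fun _ => hy) (h x)⟩
    · obtain ⟨y⟩ := ‹Nonempty U›
      exact ⟨y, fun x => hmono x _ _ (fun hp => absurd hp he) (h x)⟩
  · rintro ⟨y, hy⟩ x
    exact hmono x _ _ (fun hp => ⟨y, hp⟩) (hy x)
end

section
/- Let M be a minterm (a finite conjunction of test formula literals) and suppose M contains the literals |h| ≥ n₁ and |h| < |U| − n₂ for n₁, n₂ ∈ ℕ. Then every model (U,s,h) of M satisfies |U| ≥ n₁ + n₂ + 1. Dually, if M contains |h| < n₁ and |h| ≥ |U| − n₂, then every model satisfies |U| < n₁ + n₂. (Soundness of the domain closure.) -/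
/-- soundness of the domain closure.  If a structure satisfies
`|h| ≥ n₁` and `|h| < |U| − n₂` then `|U| ≥ n₁ + n₂ + 1`; dually, if it
satisfies `|h| < n₁` and `|h| ≥ |U| − n₂` then `|U| < n₁ + n₂`.  Here
`|h| ≥ |U| − n` is interpreted as `|U ∖ dom(h)| ≤ n`. -/
theorem stmt11 {U : Type*} [Nonempty U] {k : ℕ} (hk : 1 ≤ k)
    (h : U → Option (Fin k → U)) (hfin : (hdom h).Finite) (n₁ n₂ : ℕ) :
    ((n₁ ≤ (hdom h).ncard ∧ ¬ (Cardinal.mk ↥((hdom h)ᶜ) ≤ (n₂ : Cardinal))) →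
        ((n₁ + n₂ + 1 : ℕ) : Cardinal) ≤ Cardinal.mk U) ∧
    ((¬ (n₁ ≤ (hdom h).ncard) ∧ Cardinal.mk ↥((hdom h)ᶜ) ≤ (n₂ : Cardinal)) →
        Cardinal.mk U < ((n₁ + n₂ : ℕ) : Cardinal)) := by
  have hsum := Cardinal.mk_sum_compl (hdom h)
  have hdc : Cardinal.mk ↥(hdom h) = ((hdom h).ncard : Cardinal) := by
    have := hfin.fintype
    rw [Cardinal.mk_fintype]
    norm_cast
    rw [← Nat.card_coe_set_eq, Nat.card_eq_fintype_card]
  constructor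
  · rintro ⟨h1, h2⟩
    have h2' : ((n₂ : Cardinal) + 1) ≤ Cardinal.mk ↥((hdom h)ᶜ) := by
      exact (Cardinal.add_one_le_succ _).trans (Order.succ_le_of_lt (not_le.mp h2))
    calc ((n₁ + n₂ + 1 : ℕ) : Cardinal) = (n₁ : Cardinal) + ((n₂ : Cardinal) + 1) := by
          push_cast; ring
      _ ≤ Cardinal.mk ↥(hdom h) + Cardinal.mk ↥((hdom h)ᶜ) := by
          apply add_le_add _ h2'
          rw [hdc]; exact_mod_cast h1
      _ = Cardinal.mk U := hsum
  · rintro ⟨h1, h2⟩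
    push_neg at h1
    calc Cardinal.mk U = Cardinal.mk ↥(hdom h) + Cardinal.mk ↥((hdom h)ᶜ) := hsum.symm
      _ ≤ (((hdom h).ncard + n₂ : ℕ) : Cardinal) := by
          push_cast; rw [hdc]; exact add_le_add le_rfl h2
      _ < ((n₁ + n₂ : ℕ) : Cardinal) := by
          rw [Nat.cast_lt]; omega
end

section
/- Let M be a minterm containing a literal alloc(x) (so x must be allocated) and suppose there are pairwise M-distinct tuples ȳ₁,…,ȳ_d such that M contains ¬(x ↪ ȳᵢ) for every i ∈ [1,d] (where distinctness means M entails yᵢⱼ ≉ yᵢ'ⱼ for some coordinate j, for each pair i ≠ i'). Then every model (U,s,h) of M satisfies |U|^k ≥ d + 1, i.e., |U| ≥ ⌈(d+1)^(1/k)⌉. -/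
open Cardinal in
theorem natCast_succ_le_mk_of_injective_of_notMem_range {α : Type*} {d : ℕ} {t : Fin d → α}
    (ht : Function.Injective t) {v : α} (hv : v ∉ Set.range t) :
    ((d + 1 : ℕ) : Cardinal) ≤ #α := by
  simpa using lift_mk_le_lift_mk_of_injective (Fin.cons_injective_iff.2 ⟨hv, ht⟩)

theorem stmt12_general {U Var : Type*} {k : ℕ}
    (s : Var → U) (h : U → Option (Fin k → U))
    (x : Var) (d : ℕ) (t : Fin d → (Fin k → U)) (ht : Function.Injective t)
    (halloc : s x ∈ hdom h)
    (hne : ∀ i : Fin d, h (s x) ≠ some (t i)) :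
    ((d + 1 : ℕ) : Cardinal) ≤ Cardinal.mk (Fin k → U) := by
  obtain ⟨v, hv⟩ := Option.isSome_iff_exists.1 halloc
  refine natCast_succ_le_mk_of_injective_of_notMem_range ht (v := v) ?_
  rintro ⟨i, rfl⟩
  exact hne i hv

/-- if `x` is allocated and there are `d` pairwise distinct
forbidden tuples that `h(s(x))` avoids, then `|U|^k ≥ d + 1`, i.e.
`|U^k| ≥ d + 1`. -/
theorem stmt12 {U Var : Type*} [Nonempty U] {k : ℕ} (hk : 1 ≤ k)
    (s : Var → U) (h : U → Option (Fin k → U)) (hfin : (hdom h).Finite)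
    (x : Var) (d : ℕ) (t : Fin d → (Fin k → U)) (ht : Function.Injective t)
    (halloc : s x ∈ hdom h)
    (hne : ∀ i : Fin d, h (s x) ≠ some (t i)) :
    ((d + 1 : ℕ) : Cardinal) ≤ Cardinal.mk (Fin k → U) :=
  stmt12_general s h x d t ht halloc hne
end

section
/- Let (U,s,h) be an SL-structure satisfying a separating conjunction M₁ * M₂ of two minterms, with witnessing split h = h₁ ⊎ h₂ where (U,s,hᵢ) ⊨ Mᵢ. Suppose Mᵢ contains the cardinality literals |h| ≥ minᵢ and |h| < maxᵢ (minᵢ, maxᵢ ∈ ℕ ∪ {∞}). Then |dom(h)| ≥ min₁ + min₂ and |dom(h)| < max₁ + max₂ − 1. Moreover, for any variable x allocated by M₁ (s(x) ∈ dom(h₁)) and y allocated by M₂ (s(y) ∈ dom(h₂)), we have s(x) ≠ s(y). -/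
/-- if `h = h₁ ⊎ h₂` witnesses `M₁ * M₂`, with
`minᵢ ≤ |dom(hᵢ)| < maxᵢ` (bounds in `ℕ ∪ {∞}`), then
`min₁ + min₂ ≤ |dom(h)| < max₁ + max₂ − 1`, and variables allocated by `M₁`
and `M₂` are mapped to distinct locations. -/
theorem stmt13 {U Var : Type*} [Nonempty U] {k : ℕ} (hk : 1 ≤ k) (s : Var → U)
    (h h₁ h₂ : U → Option (Fin k → U))
    (hfin₁ : (hdom h₁).Finite) (hfin₂ : (hdom h₂).Finite)
    (hd : hdisj h₁ h₂) (hu : h = hunion h₁ h₂)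
    (min₁ min₂ max₁ max₂ : ℕ∞)
    (h1min : min₁ ≤ ((hdom h₁).ncard : ℕ∞))
    (h1max : ((hdom h₁).ncard : ℕ∞) < max₁)
    (h2min : min₂ ≤ ((hdom h₂).ncard : ℕ∞))
    (h2max : ((hdom h₂).ncard : ℕ∞) < max₂) :
    (min₁ + min₂ ≤ ((hdom h).ncard : ℕ∞) ∧
      ((hdom h).ncard : ℕ∞) < max₁ + max₂ - 1) ∧
    (∀ x y : Var, s x ∈ hdom h₁ → s y ∈ hdom h₂ → s x ≠ s y) := by
  have hdisjset : Disjoint (hdom h₁) (hdom h₂) := by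
    rw [Set.disjoint_left]
    intro u hu1 hu2
    rcases hd u with h0 | h0 <;> simp [hdom, h0] at hu1 hu2
  have hdomeq : hdom h = hdom h₁ ∪ hdom h₂ := by
    subst hu
    ext u
    simp only [hdom, hunion, Set.mem_setOf_eq, Set.mem_union]
    rcases hd u with h0 | h0 <;> simp [h0] <;> cases h₁ u <;> simp
  have hcard : (hdom h).ncard = (hdom h₁).ncard + (hdom h₂).ncard := by
    rw [hdomeq, Set.ncard_union_eq hdisjset hfin₁ hfin₂]
  constructor
  · constructor
    · rw [hcard]
      push_cast
      exact add_le_add h1min h2min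
    · rw [hcard]
      cases max₁ with
      | top =>
        rw [top_add]
        exact lt_of_lt_of_le (ENat.coe_lt_top _) (by simp [ENat.top_sub_coe])
      | coe a =>
        cases max₂ with
        | top =>
          rw [add_top]
          exact lt_of_lt_of_le (ENat.coe_lt_top _) (by simp [ENat.top_sub_coe])
        | coe b =>
          have ha : (hdom h₁).ncard < a := by exact_mod_cast h1max
          have hb : (hdom h₂).ncard < b := by exact_mod_cast h2max
          have : ((a:ℕ∞) + b - 1) = ((a + b - 1 : ℕ) : ℕ∞) := by
            push_cast [Nat.cast_sub (by omega : 1 ≤ a + b)]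
            rfl
          rw [this]
          exact_mod_cast (by omega : (hdom h₁).ncard + (hdom h₂).ncard < a + b - 1)
  · intro x y hx hy hxy
    rw [hxy] at hx
    rcases hd (s y) with h0 | h0 <;> simp [hdom, h0] at hx hy
end

section
/- Let (U, s, h) be a finite SL-structure over a heap h : U ⇀ U^k which is not α-controlled, where α > (k+1)·(|D| + m) for a finite set D ⊆ U and m ≥ 1. Then for every superset U' ⊇ U and every tuple (a₁,…,a_m) ∈ (U')^m there exists a tuple (b₁,…,b_m) ∈ U^m such that for all i, i' ∈ [1,m]: (1) if aᵢ ∈ U then bᵢ = aᵢ; (2) bᵢ = bᵢ' iff aᵢ = aᵢ'; (3) if aᵢ ∉ U then bᵢ does not occur in the tuple h(ℓ) for any ℓ ∈ D ∩ dom(h); (4) if aᵢ ∉ U then h(bᵢ) is undefined or h(bᵢ) contains a location not in {b₁,…,b_m} ∪ D. -/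
/-- construction of representative tuples in a finite
non-α-controlled structure.  The universe of the structure is a finite set
`S` inside a larger type `V` (playing the role of the superset `U' ⊇ U`);
the heap `h` has domain and range inside `S`. -/
theorem stmt18 {V : Type*} {k m α : ℕ} (hk : 1 ≤ k) (hm : 1 ≤ m)
    (S : Set V) (hSfin : S.Finite) (hSne : S.Nonempty)
    (h : V → Option (Fin k → V))
    (hdomS : ∀ v : V, (h v).isSome → v ∈ S)
    (hranS : ∀ (v : V) (w : Fin k → V), h v = some w → ∀ j, w j ∈ S)
    (D : Finset V) (hD : ↑D ⊆ S)
    (hα : (k + 1) * (D.card + m) < α)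
    (hnc : ¬ ∃ L : Fin α → V, (∀ i, L i ∈ S) ∧ ∀ ℓ ∈ S,
        (∃ i, ℓ = L i) ∨
        ∃ w, h ℓ = some w ∧ ∀ j, w j = ℓ ∨ ∃ i, w j = L i)
    (a : Fin m → V) :
    ∃ b : Fin m → V, (∀ i, b i ∈ S) ∧
      (∀ i, a i ∈ S → b i = a i) ∧
      (∀ i i', b i = b i' ↔ a i = a i') ∧
      (∀ i, a i ∉ S → ∀ ℓ ∈ D, ∀ w, h ℓ = some w → ∀ j, w j ≠ b i) ∧
      (∀ i, a i ∉ S → (h (b i) = none ∨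
        ∃ w, h (b i) = some w ∧
          ∃ j, (∀ i', w j ≠ b i') ∧ w j ∉ (D : Set V))) := by
  classical
  obtain ⟨s₀, hs₀⟩ := hSne
  push_neg at hnc
  -- key extraction lemma from non-α-control
  have key : ∀ T : Finset V, (↑T : Set V) ⊆ S → T.card ≤ α →
      ∃ ℓ ∈ S, ℓ ∉ T ∧ (h ℓ = none ∨
        ∃ w, h ℓ = some w ∧ ∃ j, w j ≠ ℓ ∧ w j ∉ T) := by
    intro T hTS hTc
    set L : Fin α → V := fun i => T.toList.getD i s₀ with hLdef
    have hLS : ∀ i, L i ∈ S := by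
      intro i
      by_cases hi : (i : ℕ) < T.toList.length
      · have hmem : T.toList.getD i s₀ ∈ T.toList := by
          rw [List.getD_eq_getElem _ _ hi]; exact List.getElem_mem _
        exact hTS (Finset.mem_coe.mpr (Finset.mem_toList.mp hmem))
      · show T.toList.getD i s₀ ∈ S
        rw [List.getD_eq_default _ _ (le_of_not_gt hi)]
        exact hs₀
    have hcov : ∀ t ∈ T, ∃ i : Fin α, L i = t := by
      intro t ht
      rw [← Finset.mem_toList, List.mem_iff_getElem] at ht
      obtain ⟨n, hn, hnt⟩ := ht
      have hnα : n < α := lt_of_lt_of_le (by simpa [Finset.length_toList] using hn) hTc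
      refine ⟨⟨n, hnα⟩, ?_⟩
      show T.toList.getD n s₀ = t
      rw [List.getD_eq_getElem _ _ hn]; exact hnt
    obtain ⟨ℓ, hℓS, hℓne, hℓw⟩ := hnc L hLS
    refine ⟨ℓ, hℓS, ?_, ?_⟩
    · intro hℓT
      obtain ⟨i, hi⟩ := hcov ℓ hℓT
      exact hℓne i hi.symm
    · cases hh : h ℓ with
      | none => exact Or.inl rfl
      | some w =>
        obtain ⟨j, hj1, hj2⟩ := hℓw w hh
        refine Or.inr ⟨w, rfl, j, hj1, ?_⟩
        intro hwT
        obtain ⟨i, hi⟩ := hcov _ hwT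
        exact hj2 i hi.symm
  -- the set R of locations occurring in h-images of D
  set R : Finset V := D.biUnion (fun ℓ => ((h ℓ).elim ∅ (fun w => Finset.image w Finset.univ))) with hRdef
  have hRmem : ∀ v, v ∈ R ↔ ∃ ℓ ∈ D, ∃ w, h ℓ = some w ∧ ∃ j, w j = v := by
    intro v
    rw [hRdef, Finset.mem_biUnion]
    constructor
    · rintro ⟨ℓ, hℓ, hv⟩
      cases hh : h ℓ with
      | none => rw [hh] at hv; simp at hv
      | some w =>
        rw [hh] at hv
        simp only [Option.elim, Finset.mem_image, Finset.mem_univ, true_and] at hv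
        obtain ⟨j, hj⟩ := hv
        exact ⟨ℓ, hℓ, w, hh, j, hj⟩
    · rintro ⟨ℓ, hℓ, w, hw, j, hj⟩
      refine ⟨ℓ, hℓ, ?_⟩
      rw [hw]
      simp only [Option.elim, Finset.mem_image, Finset.mem_univ, true_and]
      exact ⟨j, hj⟩
  have hRS : (↑R : Set V) ⊆ S := by
    intro v hv
    obtain ⟨ℓ, _, w, hw, j, hj⟩ := (hRmem v).1 (by simpa using hv)
    exact hj ▸ hranS ℓ w hw j
  have hRcard : R.card ≤ k * D.card := by
    calc R.card ≤ ∑ ℓ ∈ D, ((h ℓ).elim ∅ (fun w => Finset.image w Finset.univ)).card :=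
          Finset.card_biUnion_le
      _ ≤ ∑ _ℓ ∈ D, k := by
          refine Finset.sum_le_sum ?_
          intro ℓ _
          cases hh : h ℓ with
          | none => simp
          | some w =>
            simp only [Option.elim]
            calc (Finset.image w Finset.univ).card ≤ (Finset.univ : Finset (Fin k)).card :=
                  Finset.card_image_le
              _ = k := by simp
      _ = k * D.card := by rw [Finset.sum_const, smul_eq_mul, mul_comm]
  -- P : a-values inside S ; the main induction builds f on sets of values outside S
  set P : Finset V := (Finset.univ.image a).filter (fun x => x ∈ S) with hPdef
  have hPS : (↑P : Set V) ⊆ S := by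
    intro v hv
    simp only [hPdef, Finset.coe_filter, Set.mem_setOf_eq] at hv
    exact hv.2
  have main : ∀ n : ℕ, ∀ A : Finset V, A.card = n → P.card + A.card ≤ m →
      ∃ (f : V → V) (W : Finset V),
        (∀ x ∈ A, f x ∈ S) ∧
        Set.InjOn f ↑A ∧
        (∀ x ∈ A, f x ∉ P) ∧
        (∀ x ∈ A, f x ∉ R) ∧
        (∀ x ∈ A, f x ∉ W) ∧
        (↑W : Set V) ⊆ S ∧ W.card ≤ k * n ∧
        (∀ v ∈ W, v ∉ P) ∧ (∀ v ∈ W, v ∉ D) ∧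
        (∀ x ∈ A, h (f x) = none ∨ ∃ w, h (f x) = some w ∧ ∃ j, w j ∈ W) := by
    intro n
    induction n with
    | zero =>
      intro A hA _
      rw [Finset.card_eq_zero] at hA
      subst hA
      exact ⟨id, ∅, by simp, by simp, by simp, by simp, by simp, by simp, by simp, by simp,
        by simp, by simp⟩
    | succ n ih =>
      intro A hA hcard
      obtain ⟨x, hx⟩ : A.Nonempty := Finset.card_pos.mp (by omega)
      set A' := A.erase x with hA'def
      have hA'card : A'.card = n := by
        rw [hA'def, Finset.card_erase_of_mem hx, hA]; omega
      obtain ⟨f, W, hfS, hfinj, hfP, hfR, hfW, hWS, hWc, hWP, hWD, hwit⟩ :=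
        ih A' hA'card (by omega)
      set T : Finset V := D ∪ P ∪ A'.image f ∪ W ∪ R with hTdef
      have hTS : (↑T : Set V) ⊆ S := by
        intro v hv
        simp only [hTdef, Finset.coe_union, Set.mem_union] at hv
        rcases hv with ((((hv | hv) | hv) | hv) | hv)
        · exact hD hv
        · exact hPS hv
        · simp only [Finset.coe_image, Set.mem_image, Finset.mem_coe] at hv
          obtain ⟨y, hy, hyv⟩ := hv
          exact hyv ▸ hfS y hy
        · exact hWS hv
        · exact hRS hv
      have hTc : T.card ≤ α := by
        have h1 : T.card ≤ D.card + P.card + (A'.image f).card + W.card + R.card := by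
          calc T.card ≤ (D ∪ P ∪ A'.image f ∪ W).card + R.card := Finset.card_union_le _ _
            _ ≤ ((D ∪ P ∪ A'.image f).card + W.card) + R.card := by
                gcongr; exact Finset.card_union_le _ _
            _ ≤ (((D ∪ P).card + (A'.image f).card) + W.card) + R.card := by
                gcongr; exact Finset.card_union_le _ _
            _ ≤ (((D.card + P.card) + (A'.image f).card) + W.card) + R.card := by
                gcongr; exact Finset.card_union_le _ _
        have h2 : (A'.image f).card ≤ n := by
          calc (A'.image f).card ≤ A'.card := Finset.card_image_le
            _ = n := hA'card
        have h3 : n ≤ m := by omega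
        have h4 : k * n ≤ k * m := Nat.mul_le_mul_left k h3
        nlinarith [hα, hcard, hRcard, hWc]
      obtain ⟨ℓ, hℓS, hℓT, hℓcase⟩ := key T hTS hTc
      have hℓD : ℓ ∉ D := fun hc => hℓT (by simp [hTdef, hc])
      have hℓP : ℓ ∉ P := fun hc => hℓT (by simp [hTdef, hc])
      have hℓimg : ∀ y ∈ A', f y ≠ ℓ := by
        intro y hy hc
        exact hℓT (by simp only [hTdef, Finset.mem_union]
                      exact Or.inl (Or.inl (Or.inr (Finset.mem_image.mpr ⟨y, hy, hc⟩))))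
      have hℓW : ℓ ∉ W := fun hc => hℓT (by simp [hTdef, hc])
      have hℓR : ℓ ∉ R := fun hc => hℓT (by simp [hTdef, hc])
      have hmemA : ∀ y ∈ A, y ≠ x → y ∈ A' := fun y hy hyx => Finset.mem_erase.mpr ⟨hyx, hy⟩
      -- common facts about f' := update f x ℓ
      set f' : V → V := Function.update f x ℓ with hf'def
      have hf'x : f' x = ℓ := Function.update_self x ℓ f
      have hf'y : ∀ y, y ≠ x → f' y = f y := fun y hy => Function.update_of_ne hy ℓ f
      have hf'S : ∀ y ∈ A, f' y ∈ S := by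
        intro y hy
        by_cases hyx : y = x
        · rw [hyx, hf'x]; exact hℓS
        · rw [hf'y y hyx]; exact hfS y (hmemA y hy hyx)
      have hf'inj : Set.InjOn f' ↑A := by
        intro y hy z hz hyz
        simp only [Finset.mem_coe] at hy hz
        by_cases hyx : y = x <;> by_cases hzx : z = x
        · rw [hyx, hzx]
        · exfalso
          rw [hyx, hf'x, hf'y z hzx] at hyz
          exact hℓimg z (hmemA z hz hzx) hyz.symm
        · exfalso
          rw [hzx, hf'x, hf'y y hyx] at hyz
          exact hℓimg y (hmemA y hy hyx) hyz
        · rw [hf'y y hyx, hf'y z hzx] at hyz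
          exact hfinj (hmemA y hy hyx) (hmemA z hz hzx) hyz
      have hf'P : ∀ y ∈ A, f' y ∉ P := by
        intro y hy
        by_cases hyx : y = x
        · rw [hyx, hf'x]; exact hℓP
        · rw [hf'y y hyx]; exact hfP y (hmemA y hy hyx)
      have hf'R : ∀ y ∈ A, f' y ∉ R := by
        intro y hy
        by_cases hyx : y = x
        · rw [hyx, hf'x]; exact hℓR
        · rw [hf'y y hyx]; exact hfR y (hmemA y hy hyx)
      rcases hℓcase with hnone | ⟨w, hw, j, hwjℓ, hwjT⟩
      · -- h ℓ = none : keep W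
        refine ⟨f', W, hf'S, hf'inj, hf'P, hf'R, ?_, hWS, ?_, hWP, hWD, ?_⟩
        · intro y hy
          by_cases hyx : y = x
          · rw [hyx, hf'x]; exact hℓW
          · rw [hf'y y hyx]; exact hfW y (hmemA y hy hyx)
        · have : k * n ≤ k * (n + 1) := Nat.mul_le_mul_left k (by omega)
          omega
        · intro y hy
          by_cases hyx : y = x
          · rw [hyx, hf'x]; exact Or.inl hnone
          · rw [hf'y y hyx]; exact hwit y (hmemA y hy hyx)
      · -- h ℓ = some w with escaping component w j
        have hwjS : w j ∈ S := hranS ℓ w hw j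
        have hwjD : w j ∉ D := fun hc => hwjT (by simp [hTdef, hc])
        have hwjP : w j ∉ P := fun hc => hwjT (by simp [hTdef, hc])
        have hwjimg : ∀ y ∈ A', f y ≠ w j := by
          intro y hy hc
          exact hwjT (by simp only [hTdef, Finset.mem_union]
                         exact Or.inl (Or.inl (Or.inr (Finset.mem_image.mpr ⟨y, hy, hc⟩))))
        refine ⟨f', insert (w j) W, hf'S, hf'inj, hf'P, hf'R, ?_, ?_, ?_, ?_, ?_, ?_⟩
        · intro y hy
          rw [Finset.mem_insert, not_or]
          by_cases hyx : y = x
          · rw [hyx, hf'x]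
            exact ⟨fun hc => hwjℓ hc.symm, hℓW⟩
          · rw [hf'y y hyx]
            exact ⟨fun hc => hwjimg y (hmemA y hy hyx) hc, hfW y (hmemA y hy hyx)⟩
        · intro v hv
          simp only [Finset.coe_insert, Set.mem_insert_iff] at hv
          rcases hv with hv | hv
          · exact hv ▸ hwjS
          · exact hWS hv
        · have h1 : (insert (w j) W).card ≤ W.card + 1 := Finset.card_insert_le _ _
          have h2 : k * (n + 1) = k * n + k := by ring
          omega
        · intro v hv
          rcases Finset.mem_insert.mp hv with hv | hv
          · exact hv ▸ hwjP
          · exact hWP v hv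
        · intro v hv
          rcases Finset.mem_insert.mp hv with hv | hv
          · exact hv ▸ hwjD
          · exact hWD v hv
        · intro y hy
          by_cases hyx : y = x
          · rw [hyx, hf'x]
            exact Or.inr ⟨w, hw, j, Finset.mem_insert_self _ _⟩
          · rw [hf'y y hyx]
            rcases hwit y (hmemA y hy hyx) with hn | ⟨w', hw', j', hj'⟩
            · exact Or.inl hn
            · exact Or.inr ⟨w', hw', j', Finset.mem_insert_of_mem hj'⟩
  -- apply main to the set of a-values outside S
  set A : Finset V := (Finset.univ.image a).filter (fun x => ¬ x ∈ S) with hAdef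
  have hPA : P.card + A.card ≤ m := by
    have h1 : P.card + A.card = (Finset.univ.image a).card := by
      rw [hPdef, hAdef]
      exact Finset.card_filter_add_card_filter_not _
    have h2 : (Finset.univ.image a).card ≤ m := by
      calc (Finset.univ.image a).card ≤ (Finset.univ : Finset (Fin m)).card :=
            Finset.card_image_le
        _ = m := by simp
    omega
  obtain ⟨f, W, hfS, hfinj, hfP, hfR, hfW, hWS, hWc, hWP, hWD, hwit⟩ :=
    main A.card A rfl hPA
  have hmemA : ∀ i, a i ∉ S → a i ∈ A := by
    intro i hi
    rw [hAdef, Finset.mem_filter]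
    exact ⟨Finset.mem_image_of_mem a (Finset.mem_univ i), hi⟩
  have hmemP : ∀ i, a i ∈ S → a i ∈ P := by
    intro i hi
    rw [hPdef, Finset.mem_filter]
    exact ⟨Finset.mem_image_of_mem a (Finset.mem_univ i), hi⟩
  refine ⟨fun i => if a i ∈ S then a i else f (a i), ?_, ?_, ?_, ?_, ?_⟩
  · intro i
    by_cases hi : a i ∈ S
    · simp [hi]
    · simp only [hi, if_false]
      exact hfS (a i) (hmemA i hi)
  · intro i hi
    simp [hi]
  · intro i i'
    constructor
    · intro hb
      by_cases hi : a i ∈ S <;> by_cases hi' : a i' ∈ S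
      · simpa [hi, hi'] using hb
      · exfalso
        simp only [hi, if_true, hi', if_false] at hb
        exact hfP (a i') (hmemA i' hi') (hb ▸ hmemP i hi)
      · exfalso
        simp only [hi, if_false, hi', if_true] at hb
        exact hfP (a i) (hmemA i hi) (hb ▸ hmemP i' hi')
      · simp only [hi, if_false, hi', if_false] at hb
        exact hfinj (Finset.mem_coe.mpr (hmemA i hi)) (Finset.mem_coe.mpr (hmemA i' hi')) hb
    · intro ha
      simp [ha]
  · intro i hi ℓ hℓ w hw j hc
    simp only [hi, if_false] at hc
    exact hfR (a i) (hmemA i hi) ((hRmem (f (a i))).mpr ⟨ℓ, hℓ, w, hw, j, hc⟩)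
  · intro i hi
    simp only [hi, if_false]
    rcases hwit (a i) (hmemA i hi) with hn | ⟨w, hw, j, hj⟩
    · exact Or.inl hn
    · refine Or.inr ⟨w, hw, j, ?_, by simpa using hWD _ hj⟩
      intro i'
      by_cases hi' : a i' ∈ S
      · simp only [hi', if_true]
        exact fun hc => hWP _ hj (hc ▸ hmemP i' hi')
      · simp only [hi', if_false]
        exact fun hc => hfW (a i') (hmemA i' hi') (hc ▸ hj)
end
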